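/- Let r ≥ 2, let L_1,…,L_r be positive integers with Σ_{i=1}^r L_i = n, and set α_{i−1} = L_i/n for i = 1,…,r (so the leaf probabilities are α_0,…,α_{r−1}). Then there exists a binary tree with r leaves carrying the weights L_1,…,L_r in left-to-right order such that (a) along every root-to-leaf path, the powers P_j of the internal nodes encountered form a strictly increasing sequence, and (b) the merge cost satisfies M = Σ_{i=1}^r L_i·d_i ≤ n·H(L_1/n,…,L_r/n) + 2n. (This is the merge tree produced by powersort, whose merge cost is at most H·n + 2n and whose internal-node powers strictly increase along every root-to-leaf path.) -/

import Mathlib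

/-!
The merge tree is the Cartesian tree of the node powers: a node of minimal power is the root and
the runs to its left and right are treated recursively. Put run `i` on the segment of `[0, 1]` of
length `Lᵢ / n`; node `k` then spans from the midpoint of run `k` to that of run `k + 1`, and its
power is the least `ℓ` such that this span contains a multiple of `2^-ℓ`. If two nodes `j < k`
have the same power `ℓ`, the span of `j` contains an odd multiple of `2^-ℓ` and no even one, so
the next even multiple lies between the two spans and the node whose span contains it has power
`< ℓ`. Hence the minimum is unique in every segment and powers strictly increase towards the
leaves. As all powers are at least `1`, the depth of leaf `i` is at most the power of its parent,
a node whose span is at least `Lᵢ / (2n)` long, so `dᵢ < log₂ (n / Lᵢ) + 2`; summing with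
weights `Lᵢ` gives `n H + 2n`.
-/

/-- A (full) binary tree: every internal node has exactly two children. -/
inductive BTree where
  | leaf : BTree
  | node : BTree → BTree → BTree

namespace BTree

/-- Depths of the leaves, in left-to-right order. -/
def leafDepths : BTree → List ℕ
  | leaf => [0]
  | node l r => l.leafDepths.map (· + 1) ++ r.leafDepths.map (· + 1)

/-- Number of internal nodes. -/
def internalCount : BTree → ℕ
  | leaf => 0
  | node l r => l.internalCount + 1 + r.internalCount

/-- Given a list `P` of labels attached to the internal nodes in symmetric
(in-)order, `T.powersMono P` says that the labels strictly increase along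
every root-to-leaf path, i.e. whenever internal node `u` is a proper ancestor
of internal node `v`, the label of `u` is strictly smaller than that of `v`. -/
def powersMono : BTree → List ℕ → Prop
  | leaf, _ => True
  | node l r, P =>
      (∀ q ∈ P.take l.internalCount, P.getD l.internalCount 0 < q) ∧
      (∀ q ∈ P.drop (l.internalCount + 1), P.getD l.internalCount 0 < q) ∧
      l.powersMono (P.take l.internalCount) ∧
      r.powersMono (P.drop (l.internalCount + 1))

end BTree

/-- The power of a split with boundaries `a < b`: the index of the first bit
in which the binary fractional expansions of `a` and `b` differ. -/
noncomputable def nodePower (a b : ℝ) : ℕ :=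
  sInf {ℓ : ℕ | ⌊a * 2 ^ ℓ⌋ < ⌊b * 2 ^ ℓ⌋}

namespace BTree

theorem length_leafDepths (T : BTree) : T.leafDepths.length = T.internalCount + 1 := by
  induction T with
  | leaf => rfl
  | node l r hl hr =>
    simp only [leafDepths, List.length_append, List.length_map, hl, hr, internalCount]
    omega

theorem exists_adjacent_depth_add_le_of_powersMono {T : BTree} (hT : T ≠ leaf) {P : List ℕ}
    (hlen : P.length = T.internalCount) (hP : T.powersMono P) {c : ℕ} (hc : ∀ q ∈ P, c ≤ q)
    {i : ℕ} (hi : i < T.leafDepths.length) :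
    ∃ k, ∃ hk : k < P.length, (k = i ∨ k + 1 = i) ∧ T.leafDepths[i] + c ≤ P[k] + 1 := by
  induction T generalizing P c i with
  | leaf => exact absurd rfl hT
  | node l r ihl ihr =>
    obtain ⟨hlt, hgt, hl, hr⟩ := hP
    set m := l.internalCount with hm_def
    have hm : m < P.length := by simp only [internalCount] at hlen; omega
    rw [List.getD_eq_getElem _ _ hm] at hlt hgt
    have hcm : c ≤ P[m] := hc _ (List.getElem_mem hm)
    simp only [leafDepths, List.length_append, List.length_map, length_leafDepths] at hi ⊢
    by_cases hil : i ≤ m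
    · rw [List.getElem_append_left (by simp only [List.length_map, length_leafDepths]; omega),
        List.getElem_map]
      rcases eq_or_ne l leaf with rfl | hl'
      · exact ⟨m, hm, by simp only [m, internalCount] at hil ⊢; omega,
          by simp only [leafDepths, List.getElem_singleton]; omega⟩
      · obtain ⟨k, hk, hadj, hd⟩ := ihl hl' (by simp only [List.length_take]; omega) hl hlt
          (i := i) (by simp only [length_leafDepths]; omega)
        simp only [List.length_take, List.getElem_take] at hk hd
        exact ⟨k, by omega, hadj, by omega⟩
    · rw [List.getElem_append_right (by simp only [List.length_map, length_leafDepths]; omega),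
        List.getElem_map]
      simp only [List.length_map, length_leafDepths, ← hm_def]
      rcases eq_or_ne r leaf with rfl | hr'
      · exact ⟨m, hm, by simp only [internalCount] at hi; omega,
          by simp only [leafDepths, List.getElem_singleton]; omega⟩
      · obtain ⟨k, hk, hadj, hd⟩ := ihr hr'
          (by simp only [internalCount, List.length_drop] at hlen ⊢; omega) hr hgt (i := i - (m + 1)) (by simp only [length_leafDepths]; omega)
        simp only [List.length_drop, List.getElem_drop] at hk hd
        exact ⟨m + 1 + k, by omega, by omega, by omega⟩

end BTree

section CartesianTree

variable {α : Type*} [LinearOrder α]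

def cartesianTree (P : List α) : BTree :=
  if h : P = [] then .leaf
  else
    have := P.minIdxOn_lt_length (f := id) h
    .node (cartesianTree (P.take (P.minIdxOn id h))) (cartesianTree (P.drop (P.minIdxOn id h + 1)))
termination_by P.length
decreasing_by all_goals simp only [List.length_take, List.length_drop]; omega

theorem internalCount_cartesianTree (P : List α) :
    (cartesianTree P).internalCount = P.length := by
  induction P using cartesianTree.induct with
  | case1 => simp [cartesianTree, BTree.internalCount]
  | case2 P h _ ih₁ ih₂ =>
    rw [cartesianTree, dif_neg h, BTree.internalCount, ih₁, ih₂]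
    have := P.minIdxOn_lt_length (f := id) h
    simp only [List.length_take, List.length_drop]
    omega

def RepeatsSeparated (P : List α) : Prop :=
  ∀ j k (_ : j < k) (_ : k < P.length), P[j] = P[k] → ∃ i, ∃ (_ : j < i) (_ : i < k), P[i] < P[j]

theorem RepeatsSeparated.take {P : List α} (hP : RepeatsSeparated P) (m : ℕ) :
    RepeatsSeparated (P.take m) := by
  intro j k hjk hk heq
  simp only [List.length_take, List.getElem_take] at hk heq ⊢
  obtain ⟨i, hji, hik, hi⟩ := hP j k hjk (by omega) heq
  exact ⟨i, hji, hik, hi⟩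

theorem RepeatsSeparated.drop {P : List α} (hP : RepeatsSeparated P) (m : ℕ) :
    RepeatsSeparated (P.drop m) := by
  intro j k hjk hk heq
  simp only [List.length_drop, List.getElem_drop] at hk heq ⊢
  obtain ⟨i, hji, hik, hi⟩ := hP (m + j) (m + k) (by omega) (by omega) heq
  exact ⟨i - m, by omega, by omega, by simpa [show m + (i - m) = i by omega] using hi⟩

theorem RepeatsSeparated.getElem_minIdxOn_lt {P : List α} (hP : RepeatsSeparated P)
    (h : P ≠ []) {i : ℕ} (hi : i < P.length) (hne : i ≠ P.minIdxOn id h) :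
    P[P.minIdxOn id h]'(P.minIdxOn_lt_length h) < P[i] := by
  have hmin : ∀ j (hj : j < P.length), P[P.minIdxOn id h]'(P.minIdxOn_lt_length h) ≤ P[j] :=
    fun j hj => by
      simpa using List.apply_minOn_le_of_mem (f := id) (List.getElem_mem hj)
  refine lt_of_le_of_ne (hmin i hi) fun heq => ?_
  have hm := P.minIdxOn_lt_length (f := id) h
  rcases lt_or_gt_of_ne hne with hlt | hgt
  · obtain ⟨j, _, _, hj⟩ := hP i _ hlt hm heq.symm
    exact (hj.trans_eq heq.symm).not_ge (hmin j (by omega))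
  · obtain ⟨j, _, _, hj⟩ := hP _ i hgt hi heq
    exact hj.not_ge (hmin j (by omega))

end CartesianTree

theorem powersMono_cartesianTree {P : List ℕ} (hP : RepeatsSeparated P) :
    (cartesianTree P).powersMono P := by
  induction P using cartesianTree.induct with
  | case1 => simp [cartesianTree, BTree.powersMono]
  | case2 P h _ ih₁ ih₂ =>
    have hm := P.minIdxOn_lt_length (f := id) h
    rw [cartesianTree, dif_neg h]
    simp only [BTree.powersMono, internalCount_cartesianTree, List.length_take,
      min_eq_left hm.le, List.getD_eq_getElem _ _ hm]
    refine ⟨?_, ?_, ih₁ (hP.take _), ih₂ (hP.drop _)⟩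
    · intro q hq
      obtain ⟨j, hj, rfl⟩ := List.mem_iff_getElem.1 hq
      simp only [List.length_take, List.getElem_take] at hj ⊢
      exact hP.getElem_minIdxOn_lt h _ (by omega)
    · intro q hq
      obtain ⟨j, hj, rfl⟩ := List.mem_iff_getElem.1 hq
      simp only [List.length_drop, List.getElem_drop] at hj ⊢
      exact hP.getElem_minIdxOn_lt h _ (by omega)

theorem exists_lt_le_succ_of_lt_of_le {α : Type*} [LinearOrder α] (B : ℕ → α) {x : α} {j k : ℕ}
    (hjk : j ≤ k) (hj : B j < x) (hk : x ≤ B k) :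
    ∃ i, j ≤ i ∧ i < k ∧ B i < x ∧ x ≤ B (i + 1) := by
  induction k, hjk using Nat.le_induction with
  | base => exact absurd hk hj.not_ge
  | succ k hjk ih =>
    by_cases h : B k < x
    · exact ⟨k, hjk, k.lt_succ_self, h, hk⟩
    · obtain ⟨i, h₁, h₂, h₃, h₄⟩ := ih (le_of_not_gt h)
      exact ⟨i, h₁, by omega, h₃, h₄⟩

theorem Int.floor_lt_floor_iff_exists {x y : ℝ} : ⌊x⌋ < ⌊y⌋ ↔ ∃ t : ℤ, x < t ∧ t ≤ y :=
  ⟨fun h => ⟨⌊y⌋, Int.floor_lt.1 h, Int.floor_le y⟩,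
    fun ⟨_, hx, hy⟩ => (Int.floor_lt.2 hx).trans_le (Int.le_floor.2 hy)⟩

section NodePower

variable {a b : ℝ}

theorem nodePower_le {ℓ : ℕ} {t : ℤ} (ha : a * 2 ^ ℓ < t) (hb : t ≤ b * 2 ^ ℓ) :
    nodePower a b ≤ ℓ :=
  Nat.sInf_le (Int.floor_lt_floor_iff_exists.2 ⟨t, ha, hb⟩)

theorem exists_int_of_one_le_mul {ℓ : ℕ} (h : 1 ≤ (b - a) * 2 ^ ℓ) :
    ∃ t : ℤ, a * 2 ^ ℓ < t ∧ t ≤ b * 2 ^ ℓ :=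
  ⟨⌊b * 2 ^ ℓ⌋, by linarith [Int.sub_one_lt_floor (b * 2 ^ ℓ)], Int.floor_le _⟩

theorem exists_int_at_nodePower (hab : a < b) :
    ∃ t : ℤ, a * 2 ^ nodePower a b < t ∧ t ≤ b * 2 ^ nodePower a b := by
  obtain ⟨ℓ, hℓ⟩ := pow_unbounded_of_one_lt (b - a)⁻¹ one_lt_two
  have hsep : 1 ≤ (b - a) * 2 ^ ℓ := by
    rw [inv_lt_iff_one_lt_mul₀' (sub_pos.2 hab)] at hℓ
    exact hℓ.le
  exact Int.floor_lt_floor_iff_exists.1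
    (Nat.sInf_mem (s := {ℓ : ℕ | ⌊a * 2 ^ ℓ⌋ < ⌊b * 2 ^ ℓ⌋})
      ⟨ℓ, Int.floor_lt_floor_iff_exists.2 (exists_int_of_one_le_mul hsep)⟩)

theorem one_le_nodePower (ha : 0 ≤ a) (hab : a < b) (hb : b < 1) : 1 ≤ nodePower a b := by
  by_contra! h
  obtain ⟨t, hat, htb⟩ := exists_int_at_nodePower hab
  rw [Nat.lt_one_iff.1 h, pow_zero, mul_one] at hat htb
  have : (0 : ℤ) < t := by exact_mod_cast ha.trans_lt hat
  have : t < 1 := by exact_mod_cast htb.trans_lt hb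
  omega

theorem nodePower_lt_logb {w : ℝ} (hw : 0 < w) (hw₁ : w ≤ 1) (hwab : w ≤ b - a) :
    (nodePower a b : ℝ) < Real.logb 2 w⁻¹ + 1 := by
  have hlog : 0 ≤ Real.logb 2 w⁻¹ := Real.logb_nonneg one_lt_two (one_le_inv_iff₀.2 ⟨hw, hw₁⟩)
  set ℓ := ⌈Real.logb 2 w⁻¹⌉₊
  have hℓ : w⁻¹ ≤ 2 ^ ℓ := by
    rw [← Real.rpow_natCast, ← Real.logb_le_iff_le_rpow one_lt_two (inv_pos.2 hw)]
    exact Nat.le_ceil _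
  have hsep : 1 ≤ (b - a) * 2 ^ ℓ := by
    calc 1 = w * w⁻¹ := (mul_inv_cancel₀ hw.ne').symm
      _ ≤ (b - a) * 2 ^ ℓ := by gcongr; exact hw.le.trans hwab
  obtain ⟨t, ht₁, ht₂⟩ := exists_int_of_one_le_mul hsep
  calc (nodePower a b : ℝ) ≤ ℓ := by exact_mod_cast nodePower_le ht₁ ht₂
    _ < Real.logb 2 w⁻¹ + 1 := Nat.ceil_lt_add_one hlog

end NodePower

theorem exists_nodePower_lt_between {A : ℕ → ℝ} (hA : Monotone A) (h₀ : 0 ≤ A 0) {j k : ℕ}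
    (hjk : j < k) (hj : A j < A (j + 1)) (hk : A k < A (k + 1)) (h₁ : A (k + 1) < 1)
    (heq : nodePower (A j) (A (j + 1)) = nodePower (A k) (A (k + 1))) :
    ∃ i, j < i ∧ i < k ∧ nodePower (A i) (A (i + 1)) < nodePower (A j) (A (j + 1)) := by
  obtain ⟨ℓ, hℓ⟩ : ∃ ℓ, nodePower (A j) (A (j + 1)) = ℓ + 1 :=
    Nat.exists_eq_add_one.2 <| one_le_nodePower (h₀.trans (hA j.zero_le)) hj
      ((hA (by omega : j + 1 ≤ k + 1)).trans_lt h₁)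
  have halve : ∀ i (s : ℤ), A i * 2 ^ (ℓ + 1) < ((2 * s : ℤ) : ℝ) →
      ((2 * s : ℤ) : ℝ) ≤ A (i + 1) * 2 ^ (ℓ + 1) → nodePower (A i) (A (i + 1)) ≤ ℓ := by
    intro i s h h'
    have e : ∀ x : ℝ, x * 2 ^ (ℓ + 1) = 2 * (x * 2 ^ ℓ) := fun x => by ring
    push_cast at h h'
    rw [e] at h h'
    exact nodePower_le (t := s) (by linarith) (by linarith)
  obtain ⟨t, htj, htj'⟩ := exists_int_at_nodePower hj
  obtain ⟨u, huk, huk'⟩ := exists_int_at_nodePower hk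
  rw [hℓ] at htj htj'
  rw [← heq, hℓ] at huk huk'
  -- The span of node `j` contains the odd multiple `t` of `2^-(ℓ+1)` but no even one,
  -- so the even multiple `t + 1` lies to its right, yet no further right than `u`.
  obtain ⟨s, rfl | rfl⟩ := Int.even_or_odd' t
  · have := halve j s htj htj'
    omega
  have hright : A (j + 1) * 2 ^ (ℓ + 1) < ((2 * (s + 1) : ℤ) : ℝ) := by
    by_contra! h
    have := halve j (s + 1) (by push_cast at htj ⊢; linarith) h
    omega
  have hleft : ((2 * (s + 1) : ℤ) : ℝ) ≤ A (k + 1) * 2 ^ (ℓ + 1) := by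
    have hjk' : A (j + 1) * 2 ^ (ℓ + 1) ≤ A k * 2 ^ (ℓ + 1) := by gcongr; exact hA hjk
    have : 2 * s + 1 < u := by exact_mod_cast (htj'.trans hjk').trans_lt huk
    calc ((2 * (s + 1) : ℤ) : ℝ) ≤ u := by exact_mod_cast (by omega : 2 * (s + 1) ≤ u)
      _ ≤ _ := huk'
  obtain ⟨i, hji, hik, hi, hi'⟩ := exists_lt_le_succ_of_lt_of_le (fun i => A i * 2 ^ (ℓ + 1))
    (by omega : j + 1 ≤ k + 1) hright hleft
  have := halve i (s + 1) hi hi'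
  have hik' : i ≠ k := fun h => by rw [h, ← heq, hℓ] at this; omega
  exact ⟨i, by omega, by omega, by omega⟩

theorem repeatsSeparated_nodePowers {A : ℕ → ℝ} (hA : Monotone A) (h₀ : 0 ≤ A 0) {N : ℕ}
    (hstrict : ∀ k < N, A k < A (k + 1)) (h₁ : A N < 1) :
    RepeatsSeparated ((List.range N).map fun k => nodePower (A k) (A (k + 1))) := by
  intro j k hjk hk heq
  simp only [List.length_map, List.length_range, List.getElem_map, List.getElem_range] at hk heq ⊢
  obtain ⟨i, hji, hik, hi⟩ := exists_nodePower_lt_between hA h₀ hjk (hstrict j (by omega))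
    (hstrict k hk) ((hA (by omega : k + 1 ≤ N)).trans_lt h₁) heq
  exact ⟨i, hji, hik, hi⟩

theorem one_le_of_mem_nodePowers {A : ℕ → ℝ} (hA : Monotone A) (h₀ : 0 ≤ A 0) {N : ℕ}
    (hstrict : ∀ k < N, A k < A (k + 1)) (h₁ : A N < 1) :
    ∀ q ∈ (List.range N).map (fun k => nodePower (A k) (A (k + 1))), 1 ≤ q := by
  simp only [List.mem_map, List.mem_range, forall_exists_index, and_imp]
  rintro _ k hk rfl
  exact one_le_nodePower (h₀.trans (hA k.zero_le)) (hstrict k hk) ((hA hk).trans_lt h₁)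

section Midpoints

variable (L : ℕ → ℕ) (n : ℕ)

noncomputable def runMidpoint (k : ℕ) : ℝ :=
  ∑ i ∈ Finset.range k, (L i : ℝ) / n + L k / (2 * n)

theorem runMidpoint_succ_sub (k : ℕ) :
    runMidpoint L n (k + 1) - runMidpoint L n k = (L k + L (k + 1)) / (2 * n) := by
  simp only [runMidpoint, Finset.sum_range_succ]
  ring

theorem monotone_runMidpoint : Monotone (runMidpoint L n) :=
  monotone_nat_of_le_succ fun k => sub_nonneg.1 <| by rw [runMidpoint_succ_sub]; positivity

theorem sum_range_succ_sub_eq_runMidpoint (k : ℕ) :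
    ∑ i ∈ Finset.range (k + 1), (L i : ℝ) / n - L k / (2 * n) = runMidpoint L n k := by
  simp only [runMidpoint, Finset.sum_range_succ]
  ring

variable {L n}

theorem runMidpoint_lt_runMidpoint_succ (hn : n ≠ 0) {k : ℕ} (hk : 0 < L k) :
    runMidpoint L n k < runMidpoint L n (k + 1) :=
  sub_pos.1 <| by rw [runMidpoint_succ_sub]; positivity

theorem runMidpoint_lt_one {r : ℕ} (hn : ∑ i ∈ Finset.range r, L i = n) {k : ℕ} (hk : k < r)
    (hLk : 0 < L k) : runMidpoint L n k < 1 := by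
  have hn₀ : (0 : ℝ) < n := by
    exact_mod_cast hLk.trans_le (hn ▸ Finset.single_le_sum (by simp) (Finset.mem_range.2 hk))
  calc runMidpoint L n k < ∑ i ∈ Finset.range (k + 1), (L i : ℝ) / n := by
        rw [Finset.sum_range_succ, runMidpoint]
        gcongr
        linarith
    _ ≤ ∑ i ∈ Finset.range r, (L i : ℝ) / n :=
        Finset.sum_le_sum_of_subset_of_nonneg (Finset.range_subset_range.2 hk)
          fun _ _ _ => by positivity
    _ = 1 := by rw [← Finset.sum_div, div_eq_one_iff_eq hn₀.ne']; exact_mod_cast hn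

end Midpoints

theorem nodePower_runMidpoint_lt_logb {L : ℕ → ℕ} {r n : ℕ}
    (hn : ∑ i ∈ Finset.range r, L i = n) {i k : ℕ} (hi : i < r) (hLi : 0 < L i)
    (hadj : k = i ∨ k + 1 = i) :
    (nodePower (runMidpoint L n k) (runMidpoint L n (k + 1)) : ℝ)
      < Real.logb 2 ((L i : ℝ) / n)⁻¹ + 2 := by
  have hLin : (L i : ℝ) ≤ n := by
    exact_mod_cast hn ▸ Finset.single_le_sum (by simp) (Finset.mem_range.2 hi)
  have hLi' : (0 : ℝ) < L i := by exact_mod_cast hLi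
  have hn₀ : (0 : ℝ) < n := hLi'.trans_le hLin
  have hLadj : (L i : ℝ) ≤ L k + L (k + 1) := by
    exact_mod_cast (by rcases hadj with rfl | rfl <;> omega : L i ≤ L k + L (k + 1))
  have hw : (L i : ℝ) / (2 * n) ≤ runMidpoint L n (k + 1) - runMidpoint L n k := by
    rw [runMidpoint_succ_sub]
    gcongr
  have hlog : Real.logb 2 ((L i : ℝ) / (2 * n))⁻¹ = Real.logb 2 ((L i : ℝ) / n)⁻¹ + 1 := by
    rw [show ((L i : ℝ) / (2 * n))⁻¹ = 2 * ((L i : ℝ) / n)⁻¹ by field_simp,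
      Real.logb_mul two_ne_zero (by positivity), Real.logb_self_eq_one one_lt_two, add_comm]
  have := nodePower_lt_logb (by positivity) (div_le_one_of_le₀ (by linarith) (by positivity)) hw
  linarith

theorem sum_mul_le_entropy_add_of_le_logb {L : ℕ → ℕ} {r n : ℕ}
    (hn : ∑ i ∈ Finset.range r, L i = n) {d : ℕ → ℝ}
    (hd : ∀ i < r, d i ≤ Real.logb 2 ((L i : ℝ) / n)⁻¹ + 2) :
    ∑ i ∈ Finset.range r, (L i : ℝ) * d i
      ≤ n * ∑ i ∈ Finset.range r, ((L i : ℝ) / n) * Real.logb 2 ((L i : ℝ) / n)⁻¹ + 2 * n := by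
  have hnR : ∑ i ∈ Finset.range r, (L i : ℝ) = n := by exact_mod_cast hn
  have hterm : ∀ i ∈ Finset.range r, (L i : ℝ) * (Real.logb 2 ((L i : ℝ) / n)⁻¹ + 2)
      = n * ((L i / n) * Real.logb 2 ((L i : ℝ) / n)⁻¹) + 2 * L i := by
    intro i hi
    rcases (L i).eq_zero_or_pos with hLi | hLi
    · simp [hLi]
    · have : (n : ℝ) ≠ 0 := by
        exact_mod_cast (hLi.trans_le (hn ▸ Finset.single_le_sum (by simp) hi)).ne'
      field_simp
  calc ∑ i ∈ Finset.range r, (L i : ℝ) * d i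
      ≤ ∑ i ∈ Finset.range r, (L i : ℝ) * (Real.logb 2 ((L i : ℝ) / n)⁻¹ + 2) :=
        Finset.sum_le_sum fun i hi => by gcongr; exact hd i (Finset.mem_range.1 hi)
    _ = _ := by
        rw [Finset.sum_congr rfl hterm, Finset.sum_add_distrib, ← Finset.mul_sum, ← Finset.mul_sum,
          hnR]

/-- Powersort's guarantee: for `r ≥ 2` runs of positive lengths `L₁,…,L_r`
(`0`-indexed here: leaf `i` has weight `L i`, `i = 0,…,r-1`) summing to `n`,
there is a merge tree whose internal-node powers (w.r.t. the leaf
probabilities `αᵢ = Lᵢ/n`) strictly increase along every root-to-leaf path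
and whose merge cost is at most `n·H(L₁/n,…,L_r/n) + 2n`. -/
theorem powersort_merge_cost
    (r n : ℕ) (hr : 2 ≤ r)
    (L : ℕ → ℕ) (hL : ∀ i < r, 0 < L i)
    (hn : ∑ i ∈ Finset.range r, L i = n) :
    ∃ T : BTree,
      T.leafDepths.length = r ∧
      T.powersMono ((List.range (r - 1)).map (fun k =>
        nodePower
          ((∑ i ∈ Finset.range (k + 1), (L i : ℝ) / n) - (L k : ℝ) / (2 * n))
          ((∑ i ∈ Finset.range (k + 1), (L i : ℝ) / n) + (L (k + 1) : ℝ) / (2 * n)))) ∧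
      (∑ i ∈ Finset.range r, (L i : ℝ) * (T.leafDepths.getD i 0 : ℝ))
        ≤ (n : ℝ) * (∑ i ∈ Finset.range r, ((L i : ℝ) / n) * Real.logb 2 ((L i : ℝ) / n)⁻¹)
            + 2 * n := by
  simp only [sum_range_succ_sub_eq_runMidpoint]
  set A := runMidpoint L n
  set P := (List.range (r - 1)).map fun k => nodePower (A k) (A (k + 1))
  have hn₀ : n ≠ 0 := by
    rintro rfl
    exact (hL 0 (by omega)).ne' (Finset.sum_eq_zero_iff.1 hn 0 (Finset.mem_range.2 (by omega)))
  have hstrict : ∀ k < r - 1, A k < A (k + 1) :=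
    fun k hk => runMidpoint_lt_runMidpoint_succ hn₀ (hL k (by omega))
  have hA₀ : 0 ≤ A 0 := by simp only [A, runMidpoint]; positivity
  have hA₁ : A (r - 1) < 1 := runMidpoint_lt_one hn (by omega) (hL _ (by omega))
  have hmono : (cartesianTree P).powersMono P := powersMono_cartesianTree <|
    repeatsSeparated_nodePowers (monotone_runMidpoint L n) hA₀ hstrict hA₁
  have hlen : P.length = (cartesianTree P).internalCount := (internalCount_cartesianTree P).symm
  have hleaves : (cartesianTree P).leafDepths.length = r := by
    rw [BTree.length_leafDepths, ← hlen, List.length_map, List.length_range]; omega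
  refine ⟨cartesianTree P, hleaves, hmono, sum_mul_le_entropy_add_of_le_logb hn fun i hi => ?_⟩
  have hT : cartesianTree P ≠ .leaf := fun h => by
    simp only [h, BTree.internalCount, P, List.length_map, List.length_range] at hlen; omega
  obtain ⟨k, hk, hadj, hd⟩ := BTree.exists_adjacent_depth_add_le_of_powersMono hT hlen hmono
    (one_le_of_mem_nodePowers (monotone_runMidpoint L n) hA₀ hstrict hA₁)
    (i := i) (by omega)
  have hPk : P[k] = nodePower (A k) (A (k + 1)) := by simp [P]
  rw [hPk] at hd
  rw [List.getD_eq_getElem _ _ (by omega)]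
  calc ((cartesianTree P).leafDepths[i] : ℝ) ≤ nodePower (A k) (A (k + 1)) := by
        exact_mod_cast (by omega : _ ≤ _)
    _ ≤ _ := (nodePower_runMidpoint_lt_logb hn hi (hL i hi) hadj).le
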